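/- arXiv:2601.05761 — 4 statements merged into one kernel-verified Lean document; each statement's English description precedes it below -/
import Mathlib

section
/- Let K ∈ ℕ, let J be a graph, and let G be a graph. If G does not contain J as a K-fat minor, then the K-th power G^K does not contain J as a 3-fat minor. -/
open SimpleGraph

/-- A `K`-fat model `(𝒰, ℰ)` of a graph `J` in a graph `G`: pairwise disjoint connected
branch sets `U x` for the vertices `x` of `J`, and for each edge `xy` of `J` a branch
path `E x y` (recorded via its vertex set, realized by a path of `G` from `U x` to `U y`
meeting `U x` and `U y` only in its endvertices), such that branch paths avoid the branch
sets of non-incident vertices, distinct branch paths are internally disjoint, and any two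
distinct members of `𝒰 ∪ ℰ` have distance at least `K` in `G`, except for a branch path
and a branch set of one of the endvertices of the corresponding edge. -/
structure FatModel {α β : Type*} (J : SimpleGraph α) (G : SimpleGraph β) (K : ℕ) where
  U : α → Set β
  conn : ∀ x, (G.induce (U x)).Connected
  disj : ∀ x y, x ≠ y → Disjoint (U x) (U y)
  E : α → α → Set β
  Esymm : ∀ x y, E x y = E y x
  path : ∀ ⦃x y⦄, J.Adj x y →
    ∃ (a b : β) (p : G.Walk a b), p.IsPath ∧ a ∈ U x ∧ b ∈ U y ∧
      E x y = {v | v ∈ p.support} ∧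
      (∀ v ∈ p.support, v ∈ U x → v = a) ∧
      (∀ v ∈ p.support, v ∈ U y → v = b)
  path_disj : ∀ ⦃x y⦄, J.Adj x y → ∀ z, z ≠ x → z ≠ y → Disjoint (E x y) (U z)
  paths_int_disj : ∀ ⦃x y x' y'⦄, J.Adj x y → J.Adj x' y' → s(x, y) ≠ s(x', y') →
    ∀ v, v ∈ E x y → v ∈ E x' y' → v ∈ (U x ∪ U y) ∩ (U x' ∪ U y')
  fat_UU : ∀ x y, x ≠ y → ∀ u ∈ U x, ∀ w ∈ U y, K ≤ G.dist u w
  fat_UE : ∀ ⦃x y⦄, J.Adj x y → ∀ z, z ≠ x → z ≠ y → ∀ u ∈ E x y, ∀ w ∈ U z, K ≤ G.dist u w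
  fat_EE : ∀ ⦃x y x' y'⦄, J.Adj x y → J.Adj x' y' → s(x, y) ≠ s(x', y') →
    ∀ u ∈ E x y, ∀ w ∈ E x' y', K ≤ G.dist u w

/-- `J` is a `K`-fat minor of `G` if `G` contains a `K`-fat model of `J`. -/
def IsFatMinor {α β : Type*} (G : SimpleGraph β) (J : SimpleGraph α) (K : ℕ) : Prop :=
  Nonempty (FatModel J G K)

/-- The `K`-th power `G^K` of a graph `G`: an edge between any two distinct vertices at
distance at most `K` in `G`. -/
def power {α : Type*} (G : SimpleGraph α) (K : ℕ) : SimpleGraph α where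
  Adj x y := x ≠ y ∧ G.Reachable x y ∧ G.dist x y ≤ K
  symm := by
    constructor
    rintro x y ⟨h1, h2, h3⟩
    exact ⟨h1.symm, h2.symm, by rwa [SimpleGraph.dist_comm]⟩
  loopless := by
    constructor
    rintro x ⟨h, -⟩
    exact h rfl

/-!
A `3`-fat model in `G^K` has its branch sets and paths pairwise at `G`-distance at least
`2K + 1`, since a `G`-walk of length at most `2K` is shadowed by a `G^K`-walk of length at most
`2`. Replace each branch set by its `K/2`-neighbourhood in `G`: it stays connected, because every
vertex of a `G`-geodesic of length at most `K` lies within `K/2` of one of its ends. Likewise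
each `G^K`-branch path unfolds into a `G`-walk within `K/2` of it, and a shortest subpath
between the new branch sets is the new branch path. Two sets lying within `K/2` of sets at
distance at least `2K + 1` are at distance more than `K`.
-/

namespace SimpleGraph

variable {β : Type*} {G : SimpleGraph β} {K : ℕ}

def halfNbhd (G : SimpleGraph β) (K : ℕ) (S : Set β) : Set β :=
  {v | ∃ u ∈ S, G.Reachable v u ∧ 2 * G.dist v u ≤ K}

lemma subset_halfNbhd (S : Set β) : S ⊆ G.halfNbhd K S :=
  fun v hv => ⟨v, hv, .refl v, by simp⟩

lemma halfNbhd_mono {S T : Set β} (h : S ⊆ T) : G.halfNbhd K S ⊆ G.halfNbhd K T :=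
  fun _ ⟨u, hu, hr, hd⟩ => ⟨u, h hu, hr, hd⟩

lemma lt_dist_of_mem_halfNbhd {S T : Set β} (hST : ∀ u ∈ S, ∀ w ∈ T, 2 * K + 1 ≤ G.dist u w)
    {v w : β} (hv : v ∈ G.halfNbhd K S) (hw : w ∈ G.halfNbhd K T) : K < G.dist v w := by
  obtain ⟨u, hu, hvu, hdvu⟩ := hv
  obtain ⟨u', hu', hwu', hdwu'⟩ := hw
  have hfar := hST u hu u' hu'
  have htri : G.dist u u' ≤ G.dist v u + G.dist v w + G.dist w u' := calc
    G.dist u u' ≤ G.dist u w + G.dist w u' := hwu'.dist_triangle_right u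
    _ ≤ G.dist u v + G.dist v w + G.dist w u' := by
      gcongr; exact hvu.symm.dist_triangle_left w
    _ = G.dist v u + G.dist v w + G.dist w u' := by rw [dist_comm (u := u)]
  omega

lemma disjoint_halfNbhd {S T : Set β} (hST : ∀ u ∈ S, ∀ w ∈ T, 2 * K + 1 ≤ G.dist u w) :
    Disjoint (G.halfNbhd K S) (G.halfNbhd K T) :=
  Set.disjoint_left.2 fun v hvS hvT => by simpa using lt_dist_of_mem_halfNbhd hST hvS hvT

lemma Walk.mem_halfNbhd_of_mem_support {u w t : β} (p : G.Walk u w) (hp : p.length ≤ K)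
    (ht : t ∈ p.support) : t ∈ G.halfNbhd K {u, w} := by
  classical
  have hsplit := congrArg Walk.length (p.take_spec ht)
  rw [Walk.length_append] at hsplit
  have hut := dist_le (p.takeUntil t ht)
  have htw := dist_le (p.dropUntil t ht)
  by_cases hu : 2 * G.dist t u ≤ K
  · exact ⟨u, by simp, ⟨(p.takeUntil t ht).reverse⟩, hu⟩
  · rw [dist_comm] at hu
    exact ⟨w, by simp, ⟨p.dropUntil t ht⟩, by omega⟩

lemma Walk.exists_walk_support_subset_halfNbhd {a b : β} (p : (power G K).Walk a b) :
    ∃ q : G.Walk a b, ∀ v ∈ q.support, v ∈ G.halfNbhd K {t | t ∈ p.support} := by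
  induction p with
  | nil => exact ⟨.nil, fun v hv => subset_halfNbhd _ hv⟩
  | @cons a a' b hadj p ih =>
    obtain ⟨q, hq⟩ := ih
    obtain ⟨g, hg⟩ := hadj.2.1.exists_walk_length_eq_dist
    refine ⟨g.append q, fun v hv => ?_⟩
    rcases (Walk.mem_support_append_iff g q).1 hv with hv | hv
    · refine halfNbhd_mono ?_ (g.mem_halfNbhd_of_mem_support (hg ▸ hadj.2.2) hv)
      simp [Set.insert_subset_iff]
    · exact halfNbhd_mono (fun t ht => by simp_all) (hq v hv)

lemma Reachable.of_power {u w : β} (h : (power G K).Reachable u w) : G.Reachable u w :=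
  let ⟨p⟩ := h
  let ⟨q, _⟩ := p.exists_walk_support_subset_halfNbhd
  ⟨q⟩

lemma Walk.exists_power_walk_length_le_one {u v : β} (q : G.Walk u v) (hq : q.length ≤ K) :
    ∃ p : (power G K).Walk u v, p.length ≤ 1 := by
  by_cases huv : u = v
  · subst huv
    exact ⟨.nil, by simp⟩
  · exact ⟨(show (power G K).Adj u v from ⟨huv, ⟨q⟩, (dist_le q).trans hq⟩).toWalk, by simp⟩

lemma Walk.exists_power_walk_length_le (n : ℕ) {u v : β} (q : G.Walk u v)
    (hq : q.length ≤ n * K) : ∃ p : (power G K).Walk u v, p.length ≤ n := by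
  induction n generalizing u with
  | zero =>
    obtain rfl := Walk.eq_of_length_eq_zero (by simpa using hq)
    exact ⟨.nil, le_rfl⟩
  | succ n ih =>
    obtain ⟨p₁, hp₁⟩ := (q.take K).exists_power_walk_length_le_one (K := K)
      (by rw [Walk.take_length]; exact min_le_left _ _)
    obtain ⟨p₂, hp₂⟩ := ih (q.drop K) (by rw [Walk.drop_length]; rw [add_mul] at hq; omega)
    exact ⟨p₁.append p₂, by rw [Walk.length_append]; omega⟩

lemma le_dist_of_three_le_dist_power {u w : β} (h : 3 ≤ (power G K).dist u w) :
    2 * K + 1 ≤ G.dist u w := by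
  by_contra! hlt
  obtain ⟨q, hq⟩ := (Reachable.of_dist_ne_zero (by omega) : (power G K).Reachable u w).of_power
    |>.exists_walk_length_eq_dist
  obtain ⟨p, hp⟩ := q.exists_power_walk_length_le (K := K) 2 (by omega)
  have := dist_le p
  omega

lemma Connected.halfNbhd {S : Set β} (hS : ((power G K).induce S).Connected) :
    (G.induce (G.halfNbhd K S)).Connected := by
  obtain ⟨u₀, hu₀⟩ := hS.nonempty
  refine (connected_iff_exists_forall_reachable _).2 ⟨⟨u₀, subset_halfNbhd S hu₀⟩, ?_⟩
  rintro ⟨v, u, hu, hvu, hdvu⟩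
  obtain ⟨W⟩ := hS.preconnected ⟨u₀, hu₀⟩ ⟨u, hu⟩
  obtain ⟨q, hq⟩ := (W.map (Embedding.induce S).toHom).exists_walk_support_subset_halfNbhd
  have hqS : ∀ t ∈ q.support, t ∈ G.halfNbhd K S := fun t ht =>
    halfNbhd_mono (fun t ht => by
      simp only [Set.mem_ofPred_eq, Walk.support_map, List.mem_map] at ht
      obtain ⟨⟨t, htS⟩, -, rfl⟩ := ht
      exact htS) (hq t ht)
  obtain ⟨g, hg⟩ := hvu.symm.exists_walk_length_eq_dist
  -- every vertex of a geodesic from the centre `u` to `v` is at least as close to `u` as `v`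
  have hgS : ∀ t ∈ g.support, t ∈ G.halfNbhd K S := fun t ht => by
    classical
    refine ⟨u, hu, ⟨(g.takeUntil t ht).reverse⟩, ?_⟩
    have := (dist_le (g.takeUntil t ht)).trans (g.length_takeUntil_le_length ht)
    rw [hg, dist_comm, dist_comm (u := u)] at this
    omega
  exact (q.induce _ hqS).reachable.trans (g.induce _ hgS).reachable

def IsPathBetween (G : SimpleGraph β) (S T P : Set β) : Prop :=
  ∃ (a b : β) (p : G.Walk a b), p.IsPath ∧ a ∈ S ∧ b ∈ T ∧ P = {v | v ∈ p.support} ∧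
    (∀ v ∈ p.support, v ∈ S → v = a) ∧ (∀ v ∈ p.support, v ∈ T → v = b)

lemma isPathBetween_comm {S T P : Set β} : G.IsPathBetween S T P ↔ G.IsPathBetween T S P := by
  suffices ∀ {S T}, G.IsPathBetween S T P → G.IsPathBetween T S P from ⟨this, this⟩
  rintro S T ⟨a, b, p, hp, ha, hb, rfl, hSa, hTb⟩
  exact ⟨b, a, p.reverse, hp.reverse, hb, ha, by simp, by simpa using hTb, by simpa using hSa⟩

lemma Walk.exists_isPathBetween_subset {S T : Set β} {a b : β} (q : G.Walk a b) (ha : a ∈ S)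
    (hb : b ∈ T) : ∃ P, G.IsPathBetween S T P ∧ P ⊆ {v | v ∈ q.support} := by
  classical
  let Short n := ∃ (a' b' : β) (p : G.Walk a' b'), p.IsPath ∧ a' ∈ S ∧ b' ∈ T ∧
    p.length = n ∧ ∀ v ∈ p.support, v ∈ q.support
  have hex : ∃ n, Short n :=
    ⟨_, a, b, q.bypass, q.bypass_isPath, ha, hb, rfl, fun _ => (q.support_bypass_subset_support ·)⟩
  -- a shortest such path leaves `S` and enters `T` only once
  obtain ⟨a', b', p, hp, ha', hb', hlen, hpq⟩ := Nat.find_spec hex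
  refine ⟨_, ⟨a', b', p, hp, ha', hb', rfl, fun v hv hvS => ?_, fun v hv hvT => ?_⟩, hpq⟩
  · by_contra hva
    refine (p.length_dropUntil_lt_length hv hva).not_ge (hlen ▸ Nat.find_min' hex ?_)
    exact ⟨v, b', _, hp.dropUntil hv, hvS, hb', rfl,
      fun t ht => hpq t (p.support_dropUntil_subset_support hv ht)⟩
  · by_contra hvb
    refine (p.length_takeUntil_lt_length hv hvb).not_ge (hlen ▸ Nat.find_min' hex ?_)
    exact ⟨a', v, _, hp.takeUntil hv, ha', hvT, rfl,
      fun t ht => hpq t (p.support_takeUntil_subset_support hv ht)⟩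

end SimpleGraph

namespace FatModel

variable {α β : Type*} {J : SimpleGraph α} {G : SimpleGraph β} {K : ℕ}
  (M : FatModel J (power G K) 3)

lemma dist_U_U {x y : α} (hxy : x ≠ y) : ∀ u ∈ M.U x, ∀ w ∈ M.U y, 2 * K + 1 ≤ G.dist u w :=
  fun u hu w hw => le_dist_of_three_le_dist_power (M.fat_UU _ _ hxy u hu w hw)

lemma dist_E_U {x y z : α} (hxy : J.Adj x y) (hzx : z ≠ x) (hzy : z ≠ y) :
    ∀ u ∈ M.E x y, ∀ w ∈ M.U z, 2 * K + 1 ≤ G.dist u w :=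
  fun u hu w hw => le_dist_of_three_le_dist_power (M.fat_UE hxy z hzx hzy u hu w hw)

lemma dist_E_E {x y x' y' : α} (hxy : J.Adj x y) (hxy' : J.Adj x' y')
    (hne : s(x, y) ≠ s(x', y')) : ∀ u ∈ M.E x y, ∀ w ∈ M.E x' y', 2 * K + 1 ≤ G.dist u w :=
  fun u hu w hw => le_dist_of_three_le_dist_power (M.fat_EE hxy hxy' hne u hu w hw)

-- choosing by a predicate symmetric in `x` and `y` makes the choice itself symmetric
noncomputable def branchPathOfPower (x y : α) : Set β :=
  Classical.epsilon fun P => G.IsPathBetween (G.halfNbhd K (M.U x)) (G.halfNbhd K (M.U y)) P ∧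
    P ⊆ G.halfNbhd K (M.E x y)

lemma branchPathOfPower_comm (x y : α) : M.branchPathOfPower x y = M.branchPathOfPower y x := by
  unfold branchPathOfPower
  congr 1
  ext P
  rw [isPathBetween_comm, M.Esymm]

lemma branchPathOfPower_spec {x y : α} (hxy : J.Adj x y) :
    G.IsPathBetween (G.halfNbhd K (M.U x)) (G.halfNbhd K (M.U y)) (M.branchPathOfPower x y) ∧
      M.branchPathOfPower x y ⊆ G.halfNbhd K (M.E x y) := by
  obtain ⟨a, b, p, -, ha, hb, hE, -, -⟩ := M.path hxy
  obtain ⟨q, hq⟩ := p.exists_walk_support_subset_halfNbhd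
  obtain ⟨P, hP, hPq⟩ := q.exists_isPathBetween_subset (subset_halfNbhd _ ha) (subset_halfNbhd _ hb)
  exact Classical.epsilon_spec (p := fun P => G.IsPathBetween _ _ P ∧ P ⊆ _)
    ⟨P, hP, fun v hv => hE ▸ hq v (hPq hv)⟩

lemma branchPathOfPower_subset {x y : α} (hxy : J.Adj x y) :
    M.branchPathOfPower x y ⊆ G.halfNbhd K (M.E x y) :=
  (M.branchPathOfPower_spec hxy).2

noncomputable def ofPower : FatModel J G K where
  U x := G.halfNbhd K (M.U x)
  conn x := (M.conn x).halfNbhd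
  disj _ _ hxy := disjoint_halfNbhd (M.dist_U_U hxy)
  E := M.branchPathOfPower
  Esymm := M.branchPathOfPower_comm
  path _ _ hxy := (M.branchPathOfPower_spec hxy).1
  path_disj _ _ hxy _ hzx hzy :=
    (disjoint_halfNbhd (M.dist_E_U hxy hzx hzy)).mono_left (M.branchPathOfPower_subset hxy)
  paths_int_disj _ _ _ _ hxy hxy' hne _ hv hv' :=
    ((disjoint_halfNbhd (M.dist_E_E hxy hxy' hne)).ne_of_mem
      (M.branchPathOfPower_subset hxy hv) (M.branchPathOfPower_subset hxy' hv') rfl).elim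
  fat_UU _ _ hxy _ hu _ hw := (lt_dist_of_mem_halfNbhd (M.dist_U_U hxy) hu hw).le
  fat_UE _ _ hxy _ hzx hzy _ hu _ hw :=
    (lt_dist_of_mem_halfNbhd (M.dist_E_U hxy hzx hzy) (M.branchPathOfPower_subset hxy hu) hw).le
  fat_EE _ _ _ _ hxy hxy' hne _ hu _ hw :=
    (lt_dist_of_mem_halfNbhd (M.dist_E_E hxy hxy' hne) (M.branchPathOfPower_subset hxy hu)
      (M.branchPathOfPower_subset hxy' hw)).le

end FatModel

theorem stmt6_general {α β : Type*} (J : SimpleGraph α) (G : SimpleGraph β) (K : ℕ)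
    (h : ¬ IsFatMinor G J K) : ¬ IsFatMinor (power G K) J 3 :=
  fun ⟨M⟩ => h ⟨M.ofPower⟩

/-- If `G` has no `K`-fat `J` minor, then the `K`-th power `G^K` has no `3`-fat `J`
minor. -/
theorem stmt6 {α β : Type*} (J : SimpleGraph α) (G : SimpleGraph β) (K : ℕ) (hK : 1 ≤ K)
    (h : ¬ IsFatMinor G J K) : ¬ IsFatMinor (power G K) J 3 :=
  stmt6_general J G K h
end

section
/- Let M ≥ 1, A ≥ 0, and let φ be an (M,A)-quasi-isometry from a graph G to a graph H, and set r := M(M(3A+1) + 2M⁻¹A + 1). If X ⊆ V(G) separates sets Y,Z ⊆ V(G) in G (i.e., every Y–Z path in G meets X), then the ball B_H(φ(X), r) separates φ(Y) and φ(Z) in H. -/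
/-!
Shadow an `H`-walk `q` from `φ y` to `φ z` by a `G`-walk from `y` to `z`: pick an `A`-close
preimage of every vertex of `q`, and join the preimages of consecutive vertices by a geodesic of
`G`. Consecutive preimages are `H`-close, hence `G`-close by the lower quasi-isometry bound, so
the upper bound keeps the image of each geodesic near `q`. The shadow walk meets `X`, and the
image of that meeting point is within `r` of a vertex of `q`.
-/

open SimpleGraph

/-- An `(M,A)`-quasi-isometry from a graph `G` to a graph `H`. -/
def IsQuasiIsometry {α β : Type*} (M A : ℝ) (G : SimpleGraph α) (H : SimpleGraph β)
    (φ : α → β) : Prop :=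
  (∀ x y : α,
      M⁻¹ * (G.dist x y : ℝ) - A ≤ (H.dist (φ x) (φ y) : ℝ) ∧
      (H.dist (φ x) (φ y) : ℝ) ≤ M * (G.dist x y : ℝ) + A) ∧
  ∀ v : β, ∃ x : α, (H.dist v (φ x) : ℝ) ≤ A

/-- `X` separates `Y` and `Z` in `G`: every walk in `G` from a vertex of `Y` to a vertex
of `Z` meets `X`. -/
def Separates {α : Type*} (G : SimpleGraph α) (X Y Z : Set α) : Prop :=
  ∀ ⦃y z : α⦄, y ∈ Y → z ∈ Z → ∀ p : G.Walk y z, ∃ v ∈ p.support, v ∈ X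

lemma SimpleGraph.dist_le_length_of_mem_support {V : Type*} {G : SimpleGraph V} {x y u : V}
    (W : G.Walk x y) (hu : u ∈ W.support) : G.dist x u ≤ W.length := by
  classical
  exact (dist_le (W.takeUntil u hu)).trans (W.length_takeUntil_le_length hu)

namespace IsQuasiIsometry

variable {α β : Type*} {G : SimpleGraph α} {H : SimpleGraph β} {M A : ℝ} {φ : α → β}

lemma dist_le (hφ : IsQuasiIsometry M A G H φ) (hM : 0 < M) (x y : α) :
    (G.dist x y : ℝ) ≤ M * (H.dist (φ x) (φ y) + A) :=
  (inv_mul_le_iff₀ hM).mp (by linarith [(hφ.1 x y).1])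

lemma exists_walk_dist_map_le (hφ : IsQuasiIsometry M A G H φ) (hM : 0 < M)
    (hG : G.Connected) (hH : H.Connected) {b b' : β} (hbb' : H.dist b b' ≤ 1) {x x' : α}
    (hx : (H.dist b (φ x) : ℝ) ≤ A) (hx' : (H.dist b' (φ x') : ℝ) ≤ A) :
    ∃ W : G.Walk x x', ∀ u ∈ W.support,
      (H.dist b (φ u) : ℝ) ≤ M * (M * (3 * A + 1)) + 2 * A := by
  have hφxx' : (H.dist (φ x) (φ x') : ℝ) ≤ 2 * A + 1 := by
    have h₁ : H.dist (φ x) (φ x') ≤ H.dist (φ x) b + H.dist b (φ x') := hH.dist_triangle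
    have h₂ : H.dist b (φ x') ≤ H.dist b b' + H.dist b' (φ x') := hH.dist_triangle
    rw [dist_comm (u := φ x) (v := b)] at h₁
    have : (H.dist b b' : ℝ) ≤ 1 := by exact_mod_cast hbb'
    have : (H.dist (φ x) (φ x') : ℝ) ≤ H.dist b (φ x) + (H.dist b b' + H.dist b' (φ x')) := by
      exact_mod_cast h₁.trans (Nat.add_le_add_left h₂ _)
    linarith
  have hxx' : (G.dist x x' : ℝ) ≤ M * (3 * A + 1) := by
    have := hφ.dist_le hM x x'
    nlinarith
  obtain ⟨W, hW⟩ := hG.exists_walk_length_eq_dist x x'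
  refine ⟨W, fun u hu => ?_⟩
  have hxu : (G.dist x u : ℝ) ≤ M * (3 * A + 1) := by
    have : G.dist x u ≤ G.dist x x' := hW ▸ dist_le_length_of_mem_support W hu
    exact le_trans (by exact_mod_cast this) hxx'
  have hb : (H.dist b (φ u) : ℝ) ≤ H.dist b (φ x) + H.dist (φ x) (φ u) := by
    exact_mod_cast hH.dist_triangle
  have := (hφ.1 x u).2
  nlinarith

lemma exists_walk_shadowing (hφ : IsQuasiIsometry M A G H φ) (hM : 0 < M)
    (hG : G.Connected) (hH : H.Connected) {b c : β} (q : H.Walk b c) {x y : α}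
    (hx : (H.dist b (φ x) : ℝ) ≤ A) (hy : (H.dist c (φ y) : ℝ) ≤ A) :
    ∃ W : G.Walk x y, ∀ u ∈ W.support, ∃ v ∈ q.support,
      (H.dist v (φ u) : ℝ) ≤ M * (M * (3 * A + 1)) + 2 * A := by
  induction q generalizing x with
  | @nil b =>
    obtain ⟨W, hW⟩ := hφ.exists_walk_dist_map_le hM hG hH (by simp) hx hy
    exact ⟨W, fun u hu => ⟨b, by simp, hW u hu⟩⟩
  | @cons b b' c hbb' q ih =>
    obtain ⟨x', hx'⟩ := hφ.2 b'
    obtain ⟨W₁, hW₁⟩ :=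
      hφ.exists_walk_dist_map_le hM hG hH (dist_eq_one_iff_adj.mpr hbb').le hx hx'
    obtain ⟨W₂, hW₂⟩ := ih hx' hy
    refine ⟨W₁.append W₂, fun u hu => ?_⟩
    rcases (Walk.mem_support_append_iff _ _).mp hu with hu | hu
    · exact ⟨b, by simp, hW₁ u hu⟩
    · obtain ⟨v, hv, hvu⟩ := hW₂ u hu
      exact ⟨v, by simp [hv], hvu⟩

end IsQuasiIsometry

/-- Quasi-isometries coarsely preserve separators: if `φ` is an `(M,A)`-quasi-isometry
from `G` to `H` and `X` separates `Y` and `Z` in `G`, then the ball of radius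
`r = M(M(3A+1) + 2M⁻¹A + 1)` around `φ(X)` in `H` separates `φ(Y)` and `φ(Z)` in `H`. -/
theorem stmt13 {α β : Type*} (G : SimpleGraph α) (H : SimpleGraph β) (M A : ℝ)
    (hM : 1 ≤ M) (hA : 0 ≤ A) (hG : G.Connected) (hH : H.Connected)
    (φ : α → β) (hφ : IsQuasiIsometry M A G H φ)
    (X Y Z : Set α) (hsep : Separates G X Y Z) :
    Separates H
      {v : β | ∃ u ∈ X, ∃ p : H.Walk (φ u) v,
        (p.length : ℝ) ≤ M * (M * (3 * A + 1) + 2 * M⁻¹ * A + 1)}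
      (φ '' Y) (φ '' Z) := by
  rintro _ _ ⟨y, hy, rfl⟩ ⟨z, hz, rfl⟩ q
  have hM₀ : 0 < M := one_pos.trans_le hM
  obtain ⟨W, hW⟩ := hφ.exists_walk_shadowing hM₀ hG hH q (x := y) (y := z)
    (by simpa using hA) (by simpa using hA)
  obtain ⟨u, hu, huX⟩ := hsep hy hz W
  obtain ⟨v, hv, hvu⟩ := hW u hu
  obtain ⟨p, hp⟩ := hH.exists_walk_length_eq_dist (φ u) v
  refine ⟨v, hv, u, huX, p, ?_⟩
  have hr : M * (M * (3 * A + 1) + 2 * M⁻¹ * A + 1) = M * (M * (3 * A + 1)) + 2 * A + M := by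
    field_simp
  rw [hp, dist_comm, hr]
  linarith
end

section
/- Let G be a connected graph, Z a nonempty set of vertices of G, and suppose every vertex of G is at distance at most B from Z. Then there exists a spanning forest F of G such that each component of F contains exactly one vertex of Z, and each component of F has radius at most B in G (every vertex of a component is within distance B in G of its root in Z). -/
/-!
Let `d v` be the distance from `v` to `Z`. Every vertex outside `Z` has a neighbour strictly
closer to `Z`; choosing one as its parent, the parent edges form a forest `F ≤ G` (on a cycle,
both cycle-neighbours of a vertex maximising `d` would have to be its parent). Following
parent pointers from `v` reaches, after at most `d v ≤ B` steps, a root in `Z`, which is the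
same for all vertices of an `F`-component and is the only vertex of `Z` in that component.
-/

open SimpleGraph Function

namespace SimpleGraph

variable {α : Type*}

section ParentGraph

variable (par : α → α)

def parentGraph : SimpleGraph α := fromRel fun x y => y = par x

def parentRoot (f : α → ℕ) (x : α) : α := par^[f x] x

variable {par}

lemma parentGraph_adj {x y : α} :
    (parentGraph par).Adj x y ↔ x ≠ y ∧ (y = par x ∨ x = par y) :=
  fromRel_adj ..

lemma parentGraph_le {G : SimpleGraph α} (h : ∀ x, par x ≠ x → G.Adj x (par x)) :
    parentGraph par ≤ G := by
  intro x y hxy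
  obtain ⟨hne, rfl | rfl⟩ := parentGraph_adj.1 hxy
  · exact h x hne.symm
  · exact (h y hne).symm

lemma exists_walk_iterate_length_le (x : α) (n : ℕ) :
    ∃ w : (parentGraph par).Walk x (par^[n] x), w.length ≤ n := by
  induction n with
  | zero => exact ⟨Walk.nil, le_rfl⟩
  | succ n ih =>
    obtain ⟨w, hw⟩ := ih
    rw [iterate_succ_apply']
    by_cases hx : par (par^[n] x) = par^[n] x
    · exact ⟨w.copy rfl hx.symm, by simpa using hw.trans n.le_succ⟩
    · exact ⟨w.concat (parentGraph_adj.2 ⟨Ne.symm hx, Or.inl rfl⟩), by simpa using hw⟩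

theorem parentGraph_isAcyclic {β : Type*} [LinearOrder β] (f : α → β)
    (hf : ∀ x, par x ≠ x → f (par x) < f x) : (parentGraph par).IsAcyclic := by
  classical
  intro a c hc
  obtain ⟨M, hM, hmax⟩ := c.support.toFinset.exists_max_image f ⟨a, by simp⟩
  rw [List.mem_toFinset] at hM
  simp only [List.mem_toFinset] at hmax
  -- Since `M` maximises `f`, it is the parent of none of its cycle-neighbours.
  have to_par : ∀ y ∈ c.support, (parentGraph par).Adj M y → y = par M := by
    intro y hy hMy
    obtain ⟨hne, h | h⟩ := parentGraph_adj.1 hMy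
    · exact h
    · have := hf y (h ▸ hne)
      rw [← h] at this
      exact absurd (hmax y hy) this.not_ge
  set c' := c.rotate M hM
  have hc' : c'.IsCycle := hc.rotate hM
  have mem : ∀ i, c'.getVert i ∈ c.support := fun i =>
    (c.mem_support_rotate_iff M hM).1 (c'.getVert_mem_support i)
  exact hc'.snd_ne_penultimate <| (to_par _ (mem 1) (c'.adj_snd hc'.not_nil)).trans
    (to_par _ (mem _) (c'.adj_penultimate hc'.not_nil).symm).symm

variable {f : α → ℕ}

lemma isFixedPt_iterate_of_le (hf : ∀ x, par x ≠ x → f (par x) < f x) {x : α} {n : ℕ}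
    (hn : f x ≤ n) : IsFixedPt par (par^[n] x) := by
  induction n generalizing x with
  | zero =>
    rw [iterate_zero_apply]
    by_contra hx
    exact absurd (hf x hx) (by omega)
  | succ n ih =>
    rw [iterate_succ_apply]
    by_cases hx : par x = x
    · rw [hx, iterate_fixed hx]
      exact hx
    · exact ih (by have := hf x hx; omega)

lemma iterate_eq_parentRoot (hf : ∀ x, par x ≠ x → f (par x) < f x) {x : α} {n : ℕ}
    (hn : f x ≤ n) : par^[n] x = parentRoot par f x := by
  rw [← Nat.sub_add_cancel hn, iterate_add_apply]
  exact iterate_fixed (isFixedPt_iterate_of_le hf le_rfl) _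

lemma parentRoot_par (hf : ∀ x, par x ≠ x → f (par x) < f x) (x : α) :
    parentRoot par f (par x) = parentRoot par f x := by
  rw [← iterate_eq_parentRoot hf (n := f x + f (par x)) (Nat.le_add_left _ _),
    ← iterate_succ_apply, iterate_eq_parentRoot hf (by omega)]

lemma parentRoot_eq_of_reachable (hf : ∀ x, par x ≠ x → f (par x) < f x) {x y : α}
    (h : (parentGraph par).Reachable x y) : parentRoot par f x = parentRoot par f y := by
  obtain ⟨w⟩ := h
  induction w with
  | nil => rfl
  | cons hadj _ ih =>
    refine Eq.trans ?_ ih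
    obtain ⟨-, rfl | rfl⟩ := parentGraph_adj.1 hadj
    · exact (parentRoot_par hf _).symm
    · exact parentRoot_par hf _

lemma parentRoot_eq_self {x : α} (hx : IsFixedPt par x) : parentRoot par f x = x :=
  iterate_fixed hx _

theorem existsUnique_isFixedPt_reachable (hf : ∀ x, par x ≠ x → f (par x) < f x) (x : α) :
    ∃! z, IsFixedPt par z ∧ (parentGraph par).Reachable x z := by
  refine ⟨parentRoot par f x, ⟨isFixedPt_iterate_of_le hf le_rfl, ?_⟩, ?_⟩
  · obtain ⟨w, -⟩ := exists_walk_iterate_length_le (par := par) x (f x)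
    exact ⟨w⟩
  · rintro z ⟨hz, hxz⟩
    rw [parentRoot_eq_of_reachable hf hxz, parentRoot_eq_self hz]

lemma dist_parentRoot_le {G : SimpleGraph α} (hle : parentGraph par ≤ G) (x : α) :
    G.dist x (parentRoot par f x) ≤ f x := by
  obtain ⟨w, hw⟩ := exists_walk_iterate_length_le (par := par) x (f x)
  exact (dist_le (w.mapLe hle)).trans (by simpa using hw)

end ParentGraph

section DistToSet

variable (G : SimpleGraph α) (Z : Set α)

noncomputable def distToSet (v : α) : ℕ := sInf (G.dist v '' Z)

variable {G Z}

lemma distToSet_le {z : α} (hz : z ∈ Z) (v : α) : G.distToSet Z v ≤ G.dist v z :=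
  Nat.sInf_le ⟨z, hz, rfl⟩

lemma exists_dist_eq_distToSet (hZ : Z.Nonempty) (v : α) :
    ∃ z ∈ Z, G.dist v z = G.distToSet Z v :=
  Nat.sInf_mem (hZ.image _)

lemma distToSet_eq_zero_of_mem {z : α} (hz : z ∈ Z) : G.distToSet Z z = 0 :=
  Nat.le_zero.1 (dist_self (G := G) ▸ distToSet_le hz z)

lemma Connected.exists_adj_distToSet_lt (hG : G.Connected) (hZ : Z.Nonempty) {v : α}
    (hv : v ∉ Z) : ∃ u, G.Adj v u ∧ G.distToSet Z u < G.distToSet Z v := by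
  obtain ⟨z, hz, hvz⟩ := exists_dist_eq_distToSet (G := G) hZ v
  obtain ⟨w, hw⟩ := hG.exists_walk_length_eq_dist v z
  cases w with
  | nil => exact absurd hz hv
  | cons hadj w =>
    refine ⟨_, hadj, ?_⟩
    have := (distToSet_le hz _).trans (dist_le w)
    simp only [Walk.length_cons] at hw
    omega

open Classical in
noncomputable def stepToSet (G : SimpleGraph α) (Z : Set α) (v : α) : α :=
  if h : ∃ u, G.Adj v u ∧ G.distToSet Z u < G.distToSet Z v then h.choose else v

lemma adj_stepToSet_and_lt {v : α} (hv : G.stepToSet Z v ≠ v) :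
    G.Adj v (G.stepToSet Z v) ∧ G.distToSet Z (G.stepToSet Z v) < G.distToSet Z v := by
  unfold stepToSet at hv ⊢
  split_ifs at hv ⊢ with h
  · exact h.choose_spec
  · exact absurd rfl hv

lemma Connected.isFixedPt_stepToSet_iff (hG : G.Connected) (hZ : Z.Nonempty) {v : α} :
    IsFixedPt (G.stepToSet Z) v ↔ v ∈ Z := by
  refine ⟨fun hfix => ?_, fun hv => ?_⟩
  · by_contra hv
    have h := hG.exists_adj_distToSet_lt hZ hv
    rw [IsFixedPt, stepToSet, dif_pos h] at hfix
    exact G.ne_of_adj h.choose_spec.1 hfix.symm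
  · by_contra hstep
    have := (adj_stepToSet_and_lt hstep).2
    rw [distToSet_eq_zero_of_mem hv] at this
    exact Nat.not_lt_zero _ this

end DistToSet

end SimpleGraph

/-- Breadth-first spanning forest rooted at a set `Z`: if `G` is connected and every
vertex of `G` is within distance `B` of the nonempty set `Z`, then there is a spanning
forest `F ≤ G` (an acyclic subgraph on all of `V(G)`) such that every component of `F`
contains exactly one vertex of `Z`, and every vertex is within distance `B` in `G` of
the unique `Z`-vertex of its component. -/
theorem stmt15 {α : Type*} (G : SimpleGraph α) (hG : G.Connected)
    (Z : Set α) (hZ : Z.Nonempty) (B : ℕ)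
    (hB : ∀ v : α, ∃ z ∈ Z, G.dist v z ≤ B) :
    ∃ F : SimpleGraph α, F ≤ G ∧ F.IsAcyclic ∧
      (∀ v : α, ∃! z : α, z ∈ Z ∧ F.Reachable v z) ∧
      ∀ v z : α, z ∈ Z → F.Reachable v z → G.dist v z ≤ B := by
  have hdesc : ∀ v, G.stepToSet Z v ≠ v →
      G.distToSet Z (G.stepToSet Z v) < G.distToSet Z v := fun v hv =>
    (adj_stepToSet_and_lt hv).2
  have hle : parentGraph (G.stepToSet Z) ≤ G :=
    parentGraph_le fun v hv => (adj_stepToSet_and_lt hv).1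
  have hroot := existsUnique_isFixedPt_reachable hdesc
  simp only [hG.isFixedPt_stepToSet_iff hZ] at hroot
  refine ⟨_, hle, parentGraph_isAcyclic _ hdesc, hroot, fun v z hz hvz => ?_⟩
  obtain ⟨z', hz', hvz'⟩ := hB v
  obtain rfl : parentRoot (G.stepToSet Z) (G.distToSet Z) v = z :=
    (parentRoot_eq_of_reachable hdesc hvz).trans
      (parentRoot_eq_self ((hG.isFixedPt_stepToSet_iff hZ).2 hz))
  calc G.dist v _ ≤ G.distToSet Z v := dist_parentRoot_le hle v
    _ ≤ G.dist v z' := distToSet_le hz' v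
    _ ≤ B := hvz'
end

section
/- K₇ is not a 3-fat minor of any graph G that admits a tree-decomposition (T, 𝒱) of adhesion at most 5 such that every bag, after removing a set of at most 3 vertices of pairwise distance at most 2 in G, contains at most 6 vertices lying in distinct parts. More specifically, as in the paper: if a graph G admits a 3-fat model (𝒰,ℰ) of K₇ and a tree-decomposition of adhesion 5, then some bag of the tree-decomposition intersects all seven branch sets of the model. -/
open SimpleGraph

namespace SimpleGraph

variable {V : Type*} {G : SimpleGraph V}

lemma exists_walk_support_subset_of_preconnected_induce {S : Set V}
    (hS : (G.induce S).Preconnected) {a b : V} (ha : a ∈ S) (hb : b ∈ S) :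
    ∃ p : G.Walk a b, ∀ v ∈ p.support, v ∈ S := by
  obtain ⟨p⟩ := hS ⟨a, ha⟩ ⟨b, hb⟩
  have hsupp : ∀ v ∈ (p.map (Embedding.induce S).toHom).support, v ∈ S := by
    intro v hv
    rw [Walk.support_map, List.mem_map] at hv
    obtain ⟨u, -, rfl⟩ := hv
    exact u.2
  exact ⟨_, hsupp⟩

structure IsSeparation (G : SimpleGraph V) (A B : Set V) : Prop where
  mem_or_mem : ∀ v, v ∈ A ∨ v ∈ B
  adj : ∀ ⦃u v⦄, G.Adj u v → u ∈ A ∧ v ∈ A ∨ u ∈ B ∧ v ∈ B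

namespace IsSeparation

variable {A B : Set V}

lemma exists_mem_support_inter (hAB : IsSeparation G A B) {a b : V} (p : G.Walk a b)
    (ha : a ∉ B) (hb : b ∈ B) : ∃ v ∈ p.support, v ∈ A ∩ B := by
  obtain ⟨d, hd, hfst, hsnd⟩ := p.exists_boundary_dart Bᶜ ha (not_not.2 hb)
  refine ⟨d.snd, p.dart_snd_mem_support_of_mem_darts hd, ?_, not_not.1 hsnd⟩
  rcases hAB.adj d.adj with h | h
  · exact h.2
  · exact absurd h.1 hfst

/-- The easy direction of Menger's theorem. -/
theorem card_le_ncard_inter {ι : Type*} (hAB : IsSeparation G A B) (hfin : (A ∩ B).Finite)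
    (C : ι → Set V)
    (hC : ∀ i, ∃ a b, ∃ p : G.Walk a b, a ∉ B ∧ b ∈ B ∧ ∀ v ∈ p.support, v ∈ C i)
    (hdisj : Pairwise fun i j => Disjoint (A ∩ B ∩ C i) (A ∩ B ∩ C j)) :
    Nat.card ι ≤ (A ∩ B).ncard := by
  have hcross : ∀ i, ∃ v, v ∈ A ∩ B ∩ C i := fun i => by
    obtain ⟨a, b, p, ha, hb, hp⟩ := hC i
    obtain ⟨v, hv, hvAB⟩ := hAB.exists_mem_support_inter p ha hb
    exact ⟨v, hvAB, hp v hv⟩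
  choose f hf using hcross
  have := hfin.to_subtype
  refine Nat.card_le_card_of_injective (fun i => ⟨f i, (hf i).1⟩) fun i j hij => ?_
  have hfij : f i = f j := congrArg Subtype.val hij
  by_contra hne
  exact Set.disjoint_left.1 (hdisj hne) (hf i) (hfij ▸ hf j)

end IsSeparation

variable {τ : Type*} {T : SimpleGraph τ}

def edgeSide (T : SimpleGraph τ) (s t : τ) : Set τ :=
  {r | (T.deleteEdges {s(s, t)}).Reachable s r}

lemma mem_edgeSide_self (s t : τ) : s ∈ T.edgeSide s t := Reachable.refl s

lemma mem_edgeSide_of_adj {s t u v : τ} (hu : u ∈ T.edgeSide s t) (huv : T.Adj u v)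
    (he : s(u, v) ≠ s(s, t)) : v ∈ T.edgeSide s t :=
  Reachable.trans hu (deleteEdges_adj.2 ⟨huv, he⟩).reachable

lemma edgeSide_comm (s t : τ) :
    T.edgeSide t s = {r | (T.deleteEdges {s(s, t)}).Reachable t r} := by
  rw [edgeSide, Sym2.eq_swap]

lemma Preconnected.mem_edgeSide_or_mem_edgeSide (hT : T.Preconnected) (s t r : τ) :
    r ∈ T.edgeSide s t ∨ r ∈ T.edgeSide t s := by
  by_contra hr
  obtain ⟨d, -, hfst, hsnd⟩ := (hT s r).some.exists_boundary_dart
    (T.edgeSide s t ∪ T.edgeSide t s) (Or.inl (mem_edgeSide_self s t)) hr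
  by_cases he : s(d.fst, d.snd) = s(s, t)
  · rcases Sym2.eq_iff.1 he with ⟨-, h⟩ | ⟨-, h⟩ <;> rw [h] at hsnd
    · exact hsnd (Or.inr (mem_edgeSide_self t s))
    · exact hsnd (Or.inl (mem_edgeSide_self s t))
  · rcases hfst with h | h
    · exact hsnd (Or.inl (mem_edgeSide_of_adj h d.adj he))
    · exact hsnd (Or.inr (mem_edgeSide_of_adj h d.adj (by rwa [Sym2.eq_swap (a := t)])))

lemma IsAcyclic.disjoint_edgeSide (hT : T.IsAcyclic) {s t : τ} (hst : T.Adj s t) :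
    Disjoint (T.edgeSide s t) (T.edgeSide t s) := by
  rw [edgeSide_comm s t, Set.disjoint_left]
  intro r hs ht
  exact isAcyclic_iff_forall_adj_isBridge.1 hT hst (hs.trans ht.symm)

lemma Preconnected.exists_adj_mem_edgeSide [DecidableEq τ] (hT : T.Preconnected) {r t : τ}
    (hrt : r ≠ t) : ∃ s, T.Adj t s ∧ r ∈ T.edgeSide s t := by
  obtain ⟨p, hp⟩ := (hT t r).some.toPath
  cases p with
  | nil => exact absurd rfl hrt
  | @cons _ s _ hts q =>
    rw [Walk.cons_isPath_iff] at hp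
    refine ⟨s, hts, ⟨q.toDeleteEdges _ fun e he => ?_⟩⟩
    rintro rfl
    exact hp.2 (q.snd_mem_support_of_mem_edges he)

/-- Otherwise, choosing at every node an edge pointing away from it injects the nodes into the
edges. -/
theorem IsTree.exists_forall_adj [Fintype τ] (hT : T.IsTree) (R : τ → τ → Prop)
    (hR : ∀ ⦃s t⦄, T.Adj s t → R s t ∨ R t s) : ∃ t, ∀ s, T.Adj t s → R t s := by
  classical
  by_contra! h
  choose f hadj hR' using h
  have hinj : Function.Injective fun t => (⟨s(t, f t), hadj t⟩ : T.edgeSet) := by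
    intro t t' htt'
    rcases Sym2.eq_iff.1 (congrArg Subtype.val htt') with ⟨h, -⟩ | ⟨rfl, hback⟩
    · exact h
    · have := hR' (f t')
      rw [hback] at this
      exact (this ((hR (hadj t')).resolve_left (hR' t'))).elim
  have hcard := Fintype.card_le_of_injective _ hinj
  have := hT.card_edgeFinset
  have := Fintype.card_pos_iff.2 hT.connected.nonempty
  rw [← edgeFinset_card] at hcard
  omega

end SimpleGraph

section TreeDecomposition

variable {β τ : Type*} {G : SimpleGraph β} {T : SimpleGraph τ} {V : τ → Set β}

/-- The part `A_e^s` of the separation of `G` induced by the tree edge `e = st`. -/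
def bagSide (T : SimpleGraph τ) (V : τ → Set β) (s t : τ) : Set β :=
  ⋃ r ∈ T.edgeSide s t, V r

lemma mem_bagSide {s t : τ} {v : β} : v ∈ bagSide T V s t ↔ ∃ r ∈ T.edgeSide s t, v ∈ V r := by
  simp only [bagSide, Set.mem_iUnion, exists_prop]

lemma isSeparation_bagSide (hT : T.Preconnected) (hcover : ∀ v, ∃ t, v ∈ V t)
    (hedges : ∀ ⦃u v : β⦄, G.Adj u v → ∃ t, u ∈ V t ∧ v ∈ V t) (s t : τ) :
    IsSeparation G (bagSide T V s t) (bagSide T V t s) where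
  mem_or_mem v := by
    obtain ⟨r, hvr⟩ := hcover v
    exact (hT.mem_edgeSide_or_mem_edgeSide s t r).imp
      (fun hr => mem_bagSide.2 ⟨r, hr, hvr⟩) (fun hr => mem_bagSide.2 ⟨r, hr, hvr⟩)
  adj u v huv := by
    obtain ⟨r, hur, hvr⟩ := hedges huv
    exact (hT.mem_edgeSide_or_mem_edgeSide s t r).imp
      (fun hr => ⟨mem_bagSide.2 ⟨r, hr, hur⟩, mem_bagSide.2 ⟨r, hr, hvr⟩⟩)
      (fun hr => ⟨mem_bagSide.2 ⟨r, hr, hur⟩, mem_bagSide.2 ⟨r, hr, hvr⟩⟩)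

lemma bagSide_inter_bagSide_subset (hT : T.IsAcyclic)
    (hbags : ∀ v, (T.induce {t | v ∈ V t}).Preconnected) {s t : τ} (hst : T.Adj s t) :
    bagSide T V s t ∩ bagSide T V t s ⊆ V s ∩ V t := by
  rintro v ⟨hs, ht⟩
  obtain ⟨r, hr, hvr⟩ := mem_bagSide.1 hs
  obtain ⟨r', hr', hvr'⟩ := mem_bagSide.1 ht
  obtain ⟨p, hp⟩ := exists_walk_support_subset_of_preconnected_induce (hbags v) hvr hvr'
  obtain ⟨d, hd, hfst, hsnd⟩ := p.exists_boundary_dart _ hr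
    (Set.disjoint_right.1 (hT.disjoint_edgeSide hst) hr')
  have he : s(d.fst, d.snd) = s(s, t) := by
    by_contra he
    exact hsnd (mem_edgeSide_of_adj hfst d.adj he)
  have hfst' : v ∈ V d.fst := hp _ (p.dart_fst_mem_support_of_mem_darts hd)
  have hsnd' : v ∈ V d.snd := hp _ (p.dart_snd_mem_support_of_mem_darts hd)
  rcases Sym2.eq_iff.1 he with ⟨h₁, h₂⟩ | ⟨h₁, h₂⟩
  · exact ⟨h₁ ▸ hfst', h₂ ▸ hsnd'⟩
  · exact ⟨h₂ ▸ hsnd', h₁ ▸ hfst'⟩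

theorem inter_nonempty_of_forall_adj_bagSide_inter_nonempty (hT : T.IsTree)
    (hbags : ∀ v, (T.induce {t | v ∈ V t}).Connected)
    (hedges : ∀ ⦃u v : β⦄, G.Adj u v → ∃ t, u ∈ V t ∧ v ∈ V t) {S : Set β}
    (hS : (G.induce S).Connected) {t : τ}
    (ht : ∀ s, T.Adj t s → (bagSide T V t s ∩ S).Nonempty) : (V t ∩ S).Nonempty := by
  classical
  by_contra hVt
  have hcover : ∀ v, ∃ t, v ∈ V t := fun v => (hbags v).nonempty.elim fun r => ⟨r, r.2⟩
  obtain ⟨⟨u, hu⟩⟩ := hS.nonempty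
  obtain ⟨r, hur⟩ := hcover u
  have hrt : r ≠ t := by
    rintro rfl
    exact hVt ⟨u, hur, hu⟩
  obtain ⟨s, hts, hr⟩ := hT.connected.preconnected.exists_adj_mem_edgeSide hrt
  obtain ⟨w, hwt, hw⟩ := ht s hts
  have hsep := bagSide_inter_bagSide_subset (V := V) hT.isAcyclic
    (fun v => (hbags v).preconnected) hts.symm
  have hut : u ∉ bagSide T V t s := fun hut =>
    hVt ⟨u, (hsep ⟨mem_bagSide.2 ⟨r, hr, hur⟩, hut⟩).2, hu⟩
  obtain ⟨p, hp⟩ := exists_walk_support_subset_of_preconnected_induce hS.preconnected hu hw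
  obtain ⟨v, hv, hvst⟩ := (isSeparation_bagSide hT.connected.preconnected hcover hedges s t
    ).exists_mem_support_inter p hut hwt
  exact hVt ⟨v, (hsep hvst).2, hp v hv⟩

end TreeDecomposition

namespace FatModel

variable {α β : Type*} {G : SimpleGraph β} {K : ℕ} (M : FatModel (completeGraph α) G K)

def detour (x y z : α) : Set β := M.E x z ∪ M.U z ∪ M.E y z

/-- For `z ≠ y` these are the `|α| - 1` internally disjoint routes from `U x` to `U y`;
`z = x` stands for the direct branch path. -/
def connector [DecidableEq α] (x y z : α) : Set β :=
  if z = x then M.E x y else M.detour x y z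

lemma exists_walk_E {x y : α} (hxy : x ≠ y) :
    ∃ a ∈ M.U x, ∃ b ∈ M.U y, ∃ p : G.Walk a b, ∀ v ∈ p.support, v ∈ M.E x y := by
  obtain ⟨a, b, p, -, ha, hb, hE, -, -⟩ := M.path hxy
  exact ⟨a, ha, b, hb, p, fun v hv => hE ▸ hv⟩

lemma exists_walk_detour {x y z : α} (hxz : x ≠ z) (hyz : y ≠ z) :
    ∃ a ∈ M.U x, ∃ b ∈ M.U y, ∃ p : G.Walk a b, ∀ v ∈ p.support, v ∈ M.detour x y z := by
  obtain ⟨a, ha, c, hc, p, hp⟩ := M.exists_walk_E hxz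
  obtain ⟨b, hb, c', hc', q, hq⟩ := M.exists_walk_E hyz
  obtain ⟨r, hr⟩ :=
    exists_walk_support_subset_of_preconnected_induce (M.conn z).preconnected hc hc'
  refine ⟨a, ha, b, hb, p.append (r.append q.reverse), fun v hv => ?_⟩
  simp only [Walk.mem_support_append_iff, Walk.support_reverse, List.mem_reverse] at hv
  rcases hv with h | h | h
  · exact Or.inl (Or.inl (hp v h))
  · exact Or.inl (Or.inr (hr v h))
  · exact Or.inr (hq v h)

lemma exists_walk_connector [DecidableEq α] {x y z : α} (hxy : x ≠ y) (hzy : z ≠ y) :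
    ∃ a ∈ M.U x, ∃ b ∈ M.U y, ∃ p : G.Walk a b, ∀ v ∈ p.support, v ∈ M.connector x y z := by
  unfold connector
  split_ifs with hzx
  · exact M.exists_walk_E hxy
  · exact M.exists_walk_detour (Ne.symm hzx) (Ne.symm hzy)

lemma mem_U_of_mem_E_of_mem_E {a b c d : α} {v : β} (hab : a ≠ b) (hcd : c ≠ d)
    (hne : s(a, b) ≠ s(c, d)) (hv : v ∈ M.E a b) (hv' : v ∈ M.E c d) (ha : v ∉ M.U a) :
    v ∈ M.U b :=
  (M.paths_int_disj hab hcd hne v hv hv').1.resolve_left ha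

lemma notMem_U_of_mem_E {a b c : α} {v : β} (hab : a ≠ b) (hca : c ≠ a) (hcb : c ≠ b)
    (hv : v ∈ M.E a b) : v ∉ M.U c :=
  Set.disjoint_left.1 (M.path_disj hab c hca hcb) hv

lemma notMem_detour_of_mem_E {x y z : α} {v : β} (hxy : x ≠ y) (hzx : z ≠ x) (hzy : z ≠ y)
    (hx : v ∉ M.U x) (hy : v ∉ M.U y) (hv : v ∈ M.E x y) : v ∉ M.detour x y z := by
  rintro ((h | h) | h)
  · exact hy (M.mem_U_of_mem_E_of_mem_E hxy hzx.symm (by grind [Sym2.eq_iff]) hv h hx)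
  · exact M.notMem_U_of_mem_E hxy hzx hzy hv h
  · exact hx (M.mem_U_of_mem_E_of_mem_E hxy.symm hzy.symm (by grind [Sym2.eq_iff])
      (M.Esymm x y ▸ hv) h hy)

lemma mem_U_of_mem_detour_of_mem_detour {x y z z' : α} {v : β} (hzx : z ≠ x) (hzy : z ≠ y)
    (hz'x : z' ≠ x) (hz'y : z' ≠ y) (hzz' : z ≠ z') (hx : v ∉ M.U x) (hy : v ∉ M.U y)
    (hv : v ∈ M.detour x y z) (hv' : v ∈ M.detour x y z') : v ∈ M.U z := by
  rcases hv with (h | h) | h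
  · rcases hv' with (h' | h') | h'
    · exact M.mem_U_of_mem_E_of_mem_E hzx.symm hz'x.symm (by grind [Sym2.eq_iff]) h h' hx
    · exact absurd h' (M.notMem_U_of_mem_E hzx.symm hz'x hzz'.symm h)
    · exact M.mem_U_of_mem_E_of_mem_E hzx.symm hz'y.symm (by grind [Sym2.eq_iff]) h h' hx
  · exact h
  · rcases hv' with (h' | h') | h'
    · exact M.mem_U_of_mem_E_of_mem_E hzy.symm hz'x.symm (by grind [Sym2.eq_iff]) h h' hy
    · exact absurd h' (M.notMem_U_of_mem_E hzy.symm hz'y hzz'.symm h)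
    · exact M.mem_U_of_mem_E_of_mem_E hzy.symm hz'y.symm (by grind [Sym2.eq_iff]) h h' hy

lemma connector_inter_connector_subset [DecidableEq α] {x y z z' : α} (hxy : x ≠ y)
    (hzy : z ≠ y) (hz'y : z' ≠ y) (hzz' : z ≠ z') :
    M.connector x y z ∩ M.connector x y z' ⊆ M.U x ∪ M.U y := by
  rintro v ⟨hv, hv'⟩
  by_contra hxy'
  obtain ⟨hx, hy⟩ := not_or.1 hxy'
  rw [connector] at hv hv'
  by_cases hzx : z = x
  · have hz'x : z' ≠ x := fun h => hzz' (hzx.trans h.symm)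
    rw [if_pos hzx] at hv
    rw [if_neg hz'x] at hv'
    exact M.notMem_detour_of_mem_E hxy hz'x hz'y hx hy hv hv'
  rw [if_neg hzx] at hv
  by_cases hz'x : z' = x
  · rw [if_pos hz'x] at hv'
    exact M.notMem_detour_of_mem_E hxy hzx hzy hx hy hv' hv
  rw [if_neg hz'x] at hv'
  exact Set.disjoint_left.1 (M.disj z z' hzz')
      (M.mem_U_of_mem_detour_of_mem_detour hzx hzy hz'x hz'y hzz' hx hy hv hv')
      (M.mem_U_of_mem_detour_of_mem_detour hz'x hz'y hzx hzy hzz'.symm hx hy hv' hv)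

/-- Otherwise some branch set avoids `A` and another avoids `B`, and the `|α| - 1` connectors
between them cross `A ∩ B` at distinct vertices. -/
theorem forall_inter_nonempty_or_of_isSeparation [Fintype α] {A B : Set β}
    (hAB : IsSeparation G A B) (hfin : (A ∩ B).Finite)
    (hcard : (A ∩ B).ncard + 1 < Fintype.card α) :
    (∀ x, (A ∩ M.U x).Nonempty) ∨ ∀ x, (B ∩ M.U x).Nonempty := by
  classical
  by_contra! h
  obtain ⟨⟨x, hx⟩, y, hy⟩ := h
  have hxA : ∀ v ∈ M.U x, v ∉ A := fun v hv hvA => hx.subset ⟨hvA, hv⟩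
  have hyB : ∀ v ∈ M.U y, v ∉ B := fun v hv hvB => hy.subset ⟨hvB, hv⟩
  have hxB : ∀ v ∈ M.U x, v ∈ B := fun v hv => (hAB.mem_or_mem v).resolve_left (hxA v hv)
  have hyx : y ≠ x := by
    rintro rfl
    obtain ⟨⟨u, hu⟩⟩ := (M.conn y).nonempty
    exact hyB u hu (hxB u hu)
  have hroutes := hAB.card_le_ncard_inter hfin (fun z : {z // z ≠ x} => M.connector y x z)
    (fun z => by
      obtain ⟨a, ha, b, hb, p, hp⟩ := M.exists_walk_connector hyx z.2
      exact ⟨a, b, p, hyB a ha, hxB b hb, hp⟩)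
    (fun z z' hzz' => Set.disjoint_left.2 fun v hv hv' => by
      rcases M.connector_inter_connector_subset hyx z.2 z'.2 (Subtype.coe_ne_coe.2 hzz')
        ⟨hv.2, hv'.2⟩ with h | h
      · exact hyB v h hv.1.2
      · exact hxA v h hv.1.1)
  simp only [ne_eq, Nat.card_eq_fintype_card, Fintype.card_subtype_compl,
    Fintype.card_unique] at hroutes
  omega

end FatModel

/-- If a finite graph `G` has a `3`-fat model of `K₇` and a tree-decomposition `(T, 𝒱)`
of adhesion at most `5`, then some bag of the tree-decomposition intersects all seven
branch sets of the model. (The hypotheses state that `T` is a tree, that for each vertex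
of `G` the set of bags containing it induces a connected — in particular nonempty —
subgraph of `T`, that both endvertices of each edge of `G` lie in a common bag, and that
each adhesion set `V s ∩ V t`, for `st ∈ E(T)`, has at most `5` vertices.) -/
theorem stmt16 {β τ : Type*} [Fintype β] [Fintype τ]
    (G : SimpleGraph β) (T : SimpleGraph τ) (V : τ → Set β)
    (htree : T.IsTree)
    (hbags : ∀ v : β, (T.induce {t | v ∈ V t}).Connected)
    (hedges : ∀ ⦃u v : β⦄, G.Adj u v → ∃ t, u ∈ V t ∧ v ∈ V t)
    (hadh : ∀ ⦃s t : τ⦄, T.Adj s t → (V s ∩ V t).ncard ≤ 5)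
    (M : FatModel (completeGraph (Fin 7)) G 3) :
    ∃ t : τ, ∀ x : Fin 7, (V t ∩ M.U x).Nonempty := by
  have hside : ∀ ⦃s t : τ⦄, T.Adj s t →
      (∀ x, (bagSide T V s t ∩ M.U x).Nonempty) ∨ ∀ x, (bagSide T V t s ∩ M.U x).Nonempty := by
    intro s t hst
    have hsep :=
      bagSide_inter_bagSide_subset htree.isAcyclic (fun v => (hbags v).preconnected) hst
    have hcard := (Set.ncard_le_ncard hsep).trans (hadh hst)
    refine M.forall_inter_nonempty_or_of_isSeparation
      (isSeparation_bagSide htree.connected.preconnected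
        (fun v => (hbags v).nonempty.elim fun t => ⟨t, t.2⟩) hedges s t)
      (Set.toFinite _) ?_
    rw [Fintype.card_fin]
    omega
  obtain ⟨t, ht⟩ := htree.exists_forall_adj _ hside
  exact ⟨t, fun x => inter_nonempty_of_forall_adj_bagSide_inter_nonempty htree hbags hedges
    (M.conn x) fun s hts => ht s hts x⟩
end
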